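/- arXiv:2509.10084 — 2 statements merged into one kernel-verified Lean document; each statement's English description precedes it below -/
import Mathlib

section
/- For a smooth positive function n : ℝ³ → ℝ, the quantum Bohm potential term satisfies the identity (ε²/2) · n · ∇(Δ√n / √n) = (ε²/4) · div(n · (∇ ⊗ ∇) log n), i.e., for each component j, (ε²/2) · n · ∂ⱼ(Δ√n / √n) = (ε²/4) · Σᵢ ∂ᵢ(n · ∂ᵢ∂ⱼ log n). -/
/-! With `f = log n` one has `√n = exp (f / 2)` and `∂ᵢn = n ∂ᵢf`. Hence
`Δ√n / √n = Δf / 2 + |∇f|² / 4`, whose `j`-th derivative is `(∂ⱼΔf + ∑ᵢ ∂ᵢf ∂ⱼ∂ᵢf) / 2`, while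
`∑ᵢ ∂ᵢ(n ∂ᵢ∂ⱼf) = n ∑ᵢ (∂ᵢ∂ᵢ∂ⱼf + ∂ᵢf ∂ᵢ∂ⱼf)`. The two agree termwise because partial derivatives
of the `C³` function `f` commute. -/

open Real

/-- Directional (partial) derivative along the `i`-th coordinate direction. -/
noncomputable def pd (i : Fin 3) (f : (Fin 3 → ℝ) → ℝ) : (Fin 3 → ℝ) → ℝ :=
  fun x => fderiv ℝ f x (Pi.single i 1)

section PartialDerivatives

variable {f g : (Fin 3 → ℝ) → ℝ} {x : Fin 3 → ℝ} {i j : Fin 3}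

lemma ContDiff.pd {m n : WithTop ℕ∞} (hf : ContDiff ℝ n f) (hmn : m + 1 ≤ n) (i : Fin 3) :
    ContDiff ℝ m (pd i f) :=
  (hf.fderiv_right hmn).clm_apply contDiff_const

lemma pd_add (hf : DifferentiableAt ℝ f x) (hg : DifferentiableAt ℝ g x) :
    pd i (fun y => f y + g y) x = pd i f x + pd i g x := by
  simp [pd, fderiv_fun_add hf hg]

lemma pd_mul (hf : DifferentiableAt ℝ f x) (hg : DifferentiableAt ℝ g x) :
    pd i (fun y => f y * g y) x = f x * pd i g x + g x * pd i f x := by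
  simp [pd, fderiv_fun_mul hf hg]

lemma pd_const_mul (hf : DifferentiableAt ℝ f x) (c : ℝ) :
    pd i (fun y => c * f y) x = c * pd i f x := by
  simp [pd, fderiv_const_mul hf c]

lemma pd_sum {ι : Type*} {s : Finset ι} {A : ι → (Fin 3 → ℝ) → ℝ}
    (h : ∀ k ∈ s, DifferentiableAt ℝ (A k) x) :
    pd i (fun y => ∑ k ∈ s, A k y) x = ∑ k ∈ s, pd i (A k) x := by
  simp [pd, fderiv_fun_sum h]

lemma pd_exp_comp (hf : DifferentiableAt ℝ f x) :
    pd i (fun y => exp (f y)) x = exp (f x) * pd i f x := by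
  simp [pd, hf.hasFDerivAt.exp.fderiv]

lemma pd_exp_mul (hf : DifferentiableAt ℝ f x) (hg : DifferentiableAt ℝ g x) :
    pd i (fun y => exp (f y) * g y) x = exp (f x) * (pd i g x + pd i f x * g x) := by
  rw [pd_mul hf.exp hg, pd_exp_comp hf]
  ring

lemma pd_pd_eq_fderiv_fderiv (hf : DifferentiableAt ℝ (fderiv ℝ f) x) :
    pd i (pd j f) x = fderiv ℝ (fderiv ℝ f) x (Pi.single i 1) (Pi.single j 1) := by
  change fderiv ℝ (fun y => fderiv ℝ f y (Pi.single j 1)) x (Pi.single i 1) = _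
  simp [fderiv_clm_apply hf (differentiableAt_const _)]

lemma pd_pd_comm (hf : ContDiff ℝ 2 f) (i j : Fin 3) (x : Fin 3 → ℝ) :
    pd i (pd j f) x = pd j (pd i f) x := by
  have hdf : DifferentiableAt ℝ (fderiv ℝ f) x :=
    (hf.fderiv_right (m := 1) le_rfl).differentiable one_ne_zero x
  rw [pd_pd_eq_fderiv_fderiv hdf, pd_pd_eq_fderiv_fderiv hdf,
    hf.contDiffAt.isSymmSndFDerivAt (by simp)]

end PartialDerivatives

section ExpForm

variable {f : (Fin 3 → ℝ) → ℝ}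

lemma pd_pd_exp_const_mul_comp (hf : ContDiff ℝ 2 f) (c : ℝ) (i : Fin 3) (y : Fin 3 → ℝ) :
    pd i (pd i (fun z => exp (c * f z))) y
      = exp (c * f y) * (c * pd i (pd i f) y + c ^ 2 * (pd i f y * pd i f y)) := by
  have hdf : Differentiable ℝ f := hf.differentiable two_ne_zero
  have hdpf : Differentiable ℝ (pd i f) := (hf.pd (m := 1) le_rfl i).differentiable one_ne_zero
  have hfirst : pd i (fun z => exp (c * f z)) = fun z => exp (c * f z) * (c * pd i f z) := by
    funext z
    rw [pd_exp_comp ((hdf z).const_mul c), pd_const_mul (hdf z)]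
  rw [hfirst, pd_exp_mul ((hdf y).const_mul c) ((hdpf y).const_mul c), pd_const_mul (hdpf y),
    pd_const_mul (hdf y)]
  ring

lemma pd_laplacian_exp_half_div (hf : ContDiff ℝ 3 f) (j : Fin 3) (x : Fin 3 → ℝ) :
    pd j (fun y => (∑ i, pd i (pd i (fun z => exp (2⁻¹ * f z))) y) / exp (2⁻¹ * f y)) x
      = 2⁻¹ * ∑ i, (pd j (pd i (pd i f)) x + pd i f x * pd j (pd i f) x) := by
  have hdpf : ∀ i, Differentiable ℝ (pd i f) := fun i =>
    (hf.pd (m := 2) le_rfl i).differentiable two_ne_zero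
  have hdppf : ∀ i, Differentiable ℝ (pd i (pd i f)) := fun i =>
    ((hf.pd (m := 2) le_rfl i).pd (m := 1) le_rfl i).differentiable one_ne_zero
  have hratio : (fun y => (∑ i, pd i (pd i (fun z => exp (2⁻¹ * f z))) y) / exp (2⁻¹ * f y))
      = fun y => ∑ i, (2⁻¹ * pd i (pd i f) y + 4⁻¹ * (pd i f y * pd i f y)) := by
    funext y
    simp only [pd_pd_exp_const_mul_comp (hf.of_le (by norm_num)), ← Finset.mul_sum]
    rw [mul_div_cancel_left₀ _ (exp_pos _).ne']
    norm_num
  have hterm : ∀ i, DifferentiableAt ℝ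
      (fun y => 2⁻¹ * pd i (pd i f) y + 4⁻¹ * (pd i f y * pd i f y)) x := fun i =>
    ((hdppf i x).const_mul _).fun_add (((hdpf i x).fun_mul (hdpf i x)).const_mul _)
  rw [hratio, pd_sum fun i _ => hterm i, Finset.mul_sum]
  refine Finset.sum_congr rfl fun i _ => ?_
  rw [pd_add ((hdppf i x).const_mul _) (((hdpf i x).fun_mul (hdpf i x)).const_mul _),
    pd_const_mul (hdppf i x), pd_const_mul ((hdpf i x).fun_mul (hdpf i x)),
    pd_mul (hdpf i x) (hdpf i x)]
  ring

lemma sum_pd_exp_mul_hessian_eq (hf : ContDiff ℝ 3 f) (j : Fin 3) (x : Fin 3 → ℝ) :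
    ∑ i, pd i (fun y => exp (f y) * pd i (pd j f) y) x
      = 2 * exp (f x) *
          pd j (fun y => (∑ i, pd i (pd i (fun z => exp (2⁻¹ * f z))) y) / exp (2⁻¹ * f y)) x := by
  have hf2 : ContDiff ℝ 2 f := hf.of_le (by norm_num)
  have hdf : Differentiable ℝ f := hf.differentiable (by norm_num)
  have hcomm : ∀ i, pd i (pd j f) = pd j (pd i f) := fun i => funext (pd_pd_comm hf2 i j)
  have hcomm3 : ∀ i, pd i (pd i (pd j f)) x = pd j (pd i (pd i f)) x := fun i => by
    rw [hcomm i, pd_pd_comm (hf.pd (m := 2) le_rfl i)]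
  rw [pd_laplacian_exp_half_div hf, Finset.mul_sum, Finset.mul_sum]
  refine Finset.sum_congr rfl fun i _ => ?_
  have hdpjf : Differentiable ℝ (pd i (pd j f)) :=
    ((hf.pd (m := 2) le_rfl j).pd (m := 1) le_rfl i).differentiable one_ne_zero
  rw [pd_exp_mul (hdf x) (hdpjf x), hcomm3, hcomm]
  ring

end ExpForm

theorem bohm_potential_identity_general (ε : ℝ)
    (n : (Fin 3 → ℝ) → ℝ) (hn : ContDiff ℝ 3 n) (hpos : ∀ x, 0 < n x) :
    ∀ (x : Fin 3 → ℝ) (j : Fin 3),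
      (ε ^ 2 / 2) * n x *
        pd j (fun y => (∑ i, pd i (pd i (fun z => Real.sqrt (n z))) y)
            / Real.sqrt (n y)) x
      = (ε ^ 2 / 4) *
          ∑ i, pd i (fun y => n y * pd i (pd j (fun z => Real.log (n z))) y) x := by
  intro x j
  obtain ⟨f, hf, rfl⟩ : ∃ f, ContDiff ℝ 3 f ∧ n = fun z => exp (f z) :=
    ⟨fun z => log (n z), hn.log fun z => (hpos z).ne', funext fun z => (exp_log (hpos z)).symm⟩
  have hsqrt : ∀ t, √(exp t) = exp (2⁻¹ * t) := fun t => by rw [← exp_half, div_eq_inv_mul]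
  simp only [log_exp, hsqrt]
  rw [sum_pd_exp_mul_hessian_eq hf]
  ring

/-- Bohm potential identity:
`(ε²/2)·n·∂ⱼ(Δ√n/√n) = (ε²/4)·∑ᵢ ∂ᵢ(n·∂ᵢ∂ⱼ log n)`. -/
theorem bohm_potential_identity (ε : ℝ) (hε : 0 < ε)
    (n : (Fin 3 → ℝ) → ℝ) (hn : ContDiff ℝ 3 n) (hpos : ∀ x, 0 < n x) :
    ∀ (x : Fin 3 → ℝ) (j : Fin 3),
      (ε ^ 2 / 2) * n x *
        pd j (fun y => (∑ i, pd i (pd i (fun z => Real.sqrt (n z))) y)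
            / Real.sqrt (n y)) x
      = (ε ^ 2 / 4) *
          ∑ i, pd i (fun y => n y * pd i (pd j (fun z => Real.log (n z))) y) x :=
  bohm_potential_identity_general ε n hn hpos
end

section
/- The imaginary part of the Madelung-transformed Klein-Gordon equation yields the modified continuity equation: if φ = √n·exp(iS/ε) solves iε∂ₜφ + (ε²/2)Δφ − Vφ = (ε²υ²/2)∂ₜₜφ with n > 0 smooth, then ∂ₜn + div(n∇S) = υ²∂ₜ(n·∂ₜS). -/
/-!
Multiply the equation by `conj φ` and take imaginary parts. The time term gives
`ε Re(conj φ ∂ₜφ) = (ε/2) ∂ₜ|φ|² = (ε/2) ∂ₜn`, and the potential term drops out because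
`V |φ|²` is real. For the second derivatives, `Im(conj φ ∂∂φ) = ∂ Im(conj φ ∂φ)` since
`∂(conj φ ∂φ) = |∂φ|² + conj φ ∂∂φ`, and in Madelung variables the current
`Im(conj φ ∂φ)` is `n ∂S / ε`.
-/

open Complex

/-- Directional derivative of a function on space-time `ℝ³ × ℝ`. -/
noncomputable def dirDeriv {E : Type*} [NormedAddCommGroup E] [NormedSpace ℝ E]
    (v : (Fin 3 → ℝ) × ℝ) (f : ((Fin 3 → ℝ) × ℝ) → E) : ((Fin 3 → ℝ) × ℝ) → E :=
  fun p => fderiv ℝ f p v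

/-- Spatial direction `eᵢ`. -/
noncomputable def eS (i : Fin 3) : (Fin 3 → ℝ) × ℝ := (Pi.single i 1, 0)

/-- Time direction. -/
noncomputable def eT : (Fin 3 → ℝ) × ℝ := (0, 1)

open ComplexConjugate

section

variable {X : Type*} [NormedAddCommGroup X] [NormedSpace ℝ X] {x : X}

theorem fderiv_norm_sq_apply_eq_two_mul_re {f : X → ℂ} (hf : DifferentiableAt ℝ f x) (v : X) :
    fderiv ℝ (fun y => ‖f y‖ ^ 2) x v = 2 * (conj (f x) * fderiv ℝ f x v).re := by
  rw [hf.hasFDerivAt.norm_sq.fderiv]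
  simp only [smul_apply, ContinuousLinearMap.comp_apply, coe_innerSL_apply, Complex.inner, mul_re,
    conj_re, conj_im, nsmul_eq_mul, Nat.cast_ofNat]
  ring

theorem im_conj_mul_fderiv_fderiv {f : X → ℂ} {v : X} (hf : DifferentiableAt ℝ f x)
    (hf' : DifferentiableAt ℝ (fun y => fderiv ℝ f y v) x) :
    (conj (f x) * fderiv ℝ (fun y => fderiv ℝ f y v) x v).im
      = fderiv ℝ (fun y => (conj (f y) * fderiv ℝ f y v).im) x v := by
  have h : HasFDerivAt (fun y => (conj (f y) * fderiv ℝ f y v).im) _ x :=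
    imCLM.hasFDerivAt.comp x (hf.hasFDerivAt.star.mul hf'.hasFDerivAt)
  rw [h.fderiv]
  simp only [mul_im, conj_re, conj_im, RCLike.star_def, ContinuousLinearMap.comp_add, add_apply,
    ContinuousLinearMap.comp_apply, smul_apply, smul_eq_mul, imCLM_apply,
    ContinuousLinearEquiv.coe_coe, starL'_apply]
  ring

theorem im_conj_mul_fderiv_of_polar {f : X → ℂ} {a θ : X → ℝ} (ha : DifferentiableAt ℝ a x)
    (hθ : DifferentiableAt ℝ θ x) (hf : f = fun y => (a y : ℂ) * exp (θ y * I)) (v : X) :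
    (conj (f x) * fderiv ℝ f x v).im = a x ^ 2 * fderiv ℝ θ x v := by
  have hac : HasFDerivAt (fun y => (a y : ℂ)) (ofRealCLM.comp (fderiv ℝ a x)) x :=
    ofRealCLM.hasFDerivAt.comp x ha.hasFDerivAt
  have hθc : HasFDerivAt (fun y => (θ y : ℂ)) (ofRealCLM.comp (fderiv ℝ θ x)) x :=
    ofRealCLM.hasFDerivAt.comp x hθ.hasFDerivAt
  have h : HasFDerivAt (fun y => (a y : ℂ) * exp (θ y * I)) _ x :=
    hac.mul (hθc.mul_const I).cexp
  subst hf
  rw [h.fderiv]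
  simp only [map_mul, conj_ofReal, add_apply, smul_apply, ContinuousLinearMap.comp_apply,
    ofRealCLM_apply, smul_eq_mul, mul_im, mul_re, ofReal_re, conj_re, exp_re, I_re, ofReal_im, I_im,
    conj_im, exp_im, add_im, add_re, mul_zero, mul_one, zero_mul, sub_zero, add_zero, zero_add,
    sub_self, Real.exp_zero, one_mul, zero_sub]
  linear_combination a x ^ 2 * fderiv ℝ θ x v * Real.sin_sq_add_cos_sq (θ x)

theorem ContDiff.differentiable_fderiv_apply {E : Type*} [NormedAddCommGroup E]
    [NormedSpace ℝ E] {f : X → E} (hf : ContDiff ℝ 2 f) (v : X) :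
    Differentiable ℝ (fun y => fderiv ℝ f y v) :=
  ((hf.fderiv_right one_add_one_eq_two.le).clm_apply contDiff_const).differentiable one_ne_zero

section Madelung

variable {φ : X → ℂ} {n S : X → ℝ} {ε : ℝ}

theorem contDiff_of_madelung {k : WithTop ℕ∞} (hn : ContDiff ℝ k n) (hpos : ∀ y, 0 < n y)
    (hS : ContDiff ℝ k S) (hφ : φ = fun y => (√(n y) : ℂ) * exp ((ε⁻¹ * S y : ℝ) * I)) :
    ContDiff ℝ k φ :=
  hφ ▸ (ofRealCLM.contDiff.comp (hn.sqrt fun y => (hpos y).ne')).mul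
    ((ofRealCLM.contDiff.comp (contDiff_const.mul hS)).mul contDiff_const).cexp

theorem fderiv_apply_eq_two_mul_re_of_madelung (hφx : DifferentiableAt ℝ φ x)
    (hpos : ∀ y, 0 < n y) (hφ : φ = fun y => (√(n y) : ℂ) * exp ((ε⁻¹ * S y : ℝ) * I))
    (v : X) :
    fderiv ℝ n x v = 2 * (conj (φ x) * fderiv ℝ φ x v).re := by
  have hn : n = fun y => ‖φ y‖ ^ 2 := funext fun y => by
    rw [hφ, norm_mul, norm_exp_ofReal_mul_I, mul_one, norm_real, Real.norm_eq_abs, sq_abs,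
      Real.sq_sqrt (hpos y).le]
  rw [hn]
  exact fderiv_norm_sq_apply_eq_two_mul_re hφx v

theorem im_conj_mul_fderiv_of_madelung (hn : DifferentiableAt ℝ n x) (hpos : 0 < n x)
    (hS : DifferentiableAt ℝ S x)
    (hφ : φ = fun y => (√(n y) : ℂ) * exp ((ε⁻¹ * S y : ℝ) * I)) (v : X) :
    (conj (φ x) * fderiv ℝ φ x v).im = ε⁻¹ * (n x * fderiv ℝ S x v) := by
  rw [im_conj_mul_fderiv_of_polar (hn.sqrt hpos.ne') (hS.const_mul ε⁻¹) hφ,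
    Real.sq_sqrt hpos.le, fderiv_const_mul hS, smul_apply, smul_eq_mul]
  ring

theorem im_conj_mul_fderiv_fderiv_of_madelung (hn : ContDiff ℝ 2 n) (hpos : ∀ y, 0 < n y)
    (hS : ContDiff ℝ 2 S) (hφ : φ = fun y => (√(n y) : ℂ) * exp ((ε⁻¹ * S y : ℝ) * I))
    (v : X) :
    (conj (φ x) * fderiv ℝ (fun y => fderiv ℝ φ y v) x v).im
      = ε⁻¹ * fderiv ℝ (fun y => n y * fderiv ℝ S y v) x v := by
  have hφ2 := contDiff_of_madelung hn hpos hS hφ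
  have hcurrent : (fun y => (conj (φ y) * fderiv ℝ φ y v).im)
      = fun y => ε⁻¹ * (n y * fderiv ℝ S y v) := funext fun y =>
    im_conj_mul_fderiv_of_madelung (hn.differentiable two_ne_zero y) (hpos y)
      (hS.differentiable two_ne_zero y) hφ v
  have hnS : DifferentiableAt ℝ (fun y => n y * fderiv ℝ S y v) x :=
    (hn.differentiable two_ne_zero x).mul (hS.differentiable_fderiv_apply v x)
  rw [im_conj_mul_fderiv_fderiv (hφ2.differentiable two_ne_zero x)
    (hφ2.differentiable_fderiv_apply v x), hcurrent, fderiv_const_mul hnS]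
  rfl

end Madelung

end

theorem im_conj_mul_kleinGordon {ι : Type*} [Fintype ι] {ε c V κ : ℝ} {z A D : ℂ} {B : ι → ℂ}
    (h : I * ε * A + (c : ℂ) * ∑ i, B i - V * z = (κ : ℂ) * D) :
    ε * (conj z * A).re + c * ∑ i, (conj z * B i).im = κ * (conj z * D).im := by
  rw [← im_sum, ← Finset.mul_sum]
  have h' := congrArg (fun w => (conj z * w).im) h
  simp only [mul_im, mul_re, add_im, add_re, sub_im, sub_re, ofReal_re, ofReal_im, I_re, I_im,
    conj_re, conj_im] at h' ⊢
  linear_combination h'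

theorem continuity_from_klein_gordon_general (ε υ : ℝ) (hε : 0 < ε)
    (n S : ((Fin 3 → ℝ) × ℝ) → ℝ) (V : ((Fin 3 → ℝ) × ℝ) → ℝ)
    (hn : ContDiff ℝ 2 n) (hS : ContDiff ℝ 2 S)
    (hpos : ∀ p, 0 < n p)
    (φ : ((Fin 3 → ℝ) × ℝ) → ℂ)
    (hrep : ∀ p, φ p = (Real.sqrt (n p) : ℂ) * Complex.exp (Complex.I * (S p) / ε))
    (hKG : ∀ p,
      Complex.I * ε * dirDeriv eT φ p
        + (ε ^ 2 / 2 : ℝ) * (∑ i, dirDeriv (eS i) (dirDeriv (eS i) φ) p)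
        - (V p : ℂ) * φ p
        = ((ε ^ 2 * υ ^ 2 / 2 : ℝ) : ℂ) * dirDeriv eT (dirDeriv eT φ) p) :
    ∀ p,
      dirDeriv eT n p
        + (∑ i, dirDeriv (eS i) (fun q => n q * dirDeriv (eS i) S q) p)
        = υ ^ 2 * dirDeriv eT (fun q => n q * dirDeriv eT S q) p := by
  have hφ_polar : φ = fun q => (√(n q) : ℂ) * exp ((ε⁻¹ * S q : ℝ) * I) := by
    funext q; rw [hrep]; push_cast; ring_nf
  have hφ : ContDiff ℝ 2 φ := contDiff_of_madelung hn hpos hS hφ_polar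
  have hflux : ∀ v p, (conj (φ p) * dirDeriv v (dirDeriv v φ) p).im
      = ε⁻¹ * dirDeriv v (fun q => n q * dirDeriv v S q) p := fun v p =>
    im_conj_mul_fderiv_fderiv_of_madelung hn hpos hS hφ_polar v
  intro p
  have hdens : dirDeriv eT n p = 2 * (conj (φ p) * dirDeriv eT φ p).re :=
    fderiv_apply_eq_two_mul_re_of_madelung (hφ.differentiable two_ne_zero p) hpos hφ_polar eT
  have hIm := im_conj_mul_kleinGordon (hKG p)
  simp only [hflux, ← Finset.mul_sum] at hIm
  rw [hdens]
  field_simp at hIm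
  linear_combination hIm

/-- The imaginary part of the Madelung-transformed Klein–Gordon equation yields the
modified continuity equation `∂ₜn + div(n∇S) = υ²∂ₜ(n ∂ₜS)`. -/
theorem continuity_from_klein_gordon (ε υ : ℝ) (hε : 0 < ε) (hυ : 0 < υ)
    (n S : ((Fin 3 → ℝ) × ℝ) → ℝ) (V : ((Fin 3 → ℝ) × ℝ) → ℝ)
    (hn : ContDiff ℝ 2 n) (hS : ContDiff ℝ 2 S) (hV : Continuous V)
    (hpos : ∀ p, 0 < n p)
    (φ : ((Fin 3 → ℝ) × ℝ) → ℂ)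
    (hrep : ∀ p, φ p = (Real.sqrt (n p) : ℂ) * Complex.exp (Complex.I * (S p) / ε))
    (hKG : ∀ p,
      Complex.I * ε * dirDeriv eT φ p
        + (ε ^ 2 / 2 : ℝ) * (∑ i, dirDeriv (eS i) (dirDeriv (eS i) φ) p)
        - (V p : ℂ) * φ p
        = ((ε ^ 2 * υ ^ 2 / 2 : ℝ) : ℂ) * dirDeriv eT (dirDeriv eT φ) p) :
    ∀ p,
      dirDeriv eT n p
        + (∑ i, dirDeriv (eS i) (fun q => n q * dirDeriv (eS i) S q) p)
        = υ ^ 2 * dirDeriv eT (fun q => n q * dirDeriv eT S q) p :=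
  continuity_from_klein_gordon_general ε υ hε n S V hn hS hpos φ hrep hKG
end
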